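/- arXiv:1504.06501 — 3 statements merged into one kernel-verified Lean document; each statement's English description precedes it below -/
import Mathlib

section
/- For every input I and buffer size M, there exists a proper M-feasible output S of I, i.e., one in which every run is maximal, such that R(S) = OPT_M(I). -/
namespace RunGen

variable {α : Type*} [LinearOrder α]

/-- A run: a contiguous monotone (nondecreasing or nonincreasing) block. -/
def IsRun (l : List α) : Prop := l.Chain' (· ≤ ·) ∨ l.Chain' (· ≥ ·)

/-- `S` can be partitioned into `n` contiguous runs. -/
def RunsInto (S : List α) (n : ℕ) : Prop :=
  ∃ P : List (List α), P.flatten = S ∧ P.length = n ∧ ∀ r ∈ P, IsRun r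

/-- `R S` is the minimum number of contiguous runs into which `S` can be partitioned. -/
noncomputable def R (S : List α) : ℕ := sInf {n | RunsInto S n}

/-- `S` is an `M`-feasible output of the input `I`: `S` is a rearrangement of `I` in which
the element written at (0-indexed) step `t` lies among the first `M + t` input elements
(a size-`M` buffer refilled after each write). -/
def IsFeasibleOutput (M : ℕ) (I S : List α) : Prop :=
  S.length = I.length ∧
    ∃ σ : Fin I.length ≃ Fin I.length,
      ∀ t : Fin I.length, S[(t : ℕ)]? = I[(σ t : ℕ)]? ∧ (σ t : ℕ) < M + (t : ℕ)

/-- `OPT M I` is the minimum of `R S` over all `M`-feasible outputs `S` of `I`. -/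
noncomputable def OPT (M : ℕ) (I : List α) : ℕ :=
  sInf {n | ∃ S : List α, IsFeasibleOutput M I S ∧ RunsInto S n}

/-- The smallest buffered element that can continue an increasing run whose last written
element is `last?` (`none` at the start of a run, where the smallest element is chosen). -/
def nextUp (last? : Option α) (B : List α) : Option α :=
  match last? with
  | none => B.min?
  | some l => (B.filter fun x => decide (l ≤ x)).min?

/-- The largest buffered element that can continue a decreasing run. -/
def nextDown (last? : Option α) (B : List α) : Option α :=
  match last? with
  | none => B.max?
  | some l => (B.filter fun x => decide (x ≤ l)).max?

/-- Writing the maximal increasing run from buffer `B` (in arrival order) and remaining input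
`J` (`fuel` bounds the number of steps; `B.length + J.length` always suffices).  After each
write the next input element, if any, is ingested.  Returns
`(run written, final buffer in arrival order, final remaining input)`. -/
def incAux : ℕ → Option α → List α → List α → List α × List α × List α
  | 0, _, B, J => ([], B, J)
  | fuel + 1, last?, B, J =>
    match nextUp last? B with
    | none => ([], B, J)
    | some x =>
      let res := incAux fuel (some x) (B.erase x ++ J.take 1) (J.drop 1)
      (x :: res.1, res.2.1, res.2.2)

/-- Writing the maximal decreasing run; see `incAux`. -/
def decAux : ℕ → Option α → List α → List α → List α × List α × List α
  | 0, _, B, J => ([], B, J)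
  | fuel + 1, last?, B, J =>
    match nextDown last? B with
    | none => ([], B, J)
    | some x =>
      let res := decAux fuel (some x) (B.erase x ++ J.take 1) (J.drop 1)
      (x :: res.1, res.2.1, res.2.2)

/-- The maximal increasing run from the state `(B, J)`. -/
def maxIncRun (B J : List α) : List α := (incAux (B.length + J.length) none B J).1

/-- The state (buffer in arrival order, remaining input) after writing the maximal
increasing run from `(B, J)`. -/
def incState (B J : List α) : List α × List α := (incAux (B.length + J.length) none B J).2

/-- The maximal decreasing run from the state `(B, J)`. -/
def maxDecRun (B J : List α) : List α := (decAux (B.length + J.length) none B J).1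

/-- The state after writing the maximal decreasing run from `(B, J)`. -/
def decState (B J : List α) : List α × List α := (decAux (B.length + J.length) none B J).2

/-- The maximal run in direction `d` (`true` = increasing, `false` = decreasing). -/
def dirRun (d : Bool) (B J : List α) : List α := if d then maxIncRun B J else maxDecRun B J

/-- The state after writing the maximal run in direction `d`. -/
def dirState (d : Bool) (B J : List α) : List α × List α :=
  if d then incState B J else decState B J

/-- `Writes B J S B' J'`: from the state with buffer `B` (in arrival order) and remaining
input `J`, an algorithm can write exactly the sequence `S` (each written element is removed
from the buffer, and the next input element, if any, is then ingested), ending at the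
state `(B', J')`. -/
inductive Writes : List α → List α → List α → List α → List α → Prop
  | nil (B J : List α) : Writes B J [] B J
  | step (B J : List α) (i : ℕ) (S B' J' : List α) (h : i < B.length)
      (hrest : Writes (B.eraseIdx i ++ J.take 1) (J.drop 1) S B' J') :
      Writes B J (B[i]'h :: S) B' J'

/-- `ProperWrites B J P B' J'`: from state `(B, J)`, a proper algorithm (one that always
writes maximal runs) can write the list of runs `P`, ending at state `(B', J')`. -/
inductive ProperWrites : List α → List α → List (List α) → List α → List α → Prop
  | nil (B J : List α) : ProperWrites B J [] B J
  | step (d : Bool) (B J : List α) (P : List (List α)) (B' J' : List α) (hB : B ≠ [])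
      (h : ProperWrites (dirState d B J).1 (dirState d B J).2 P B' J') :
      ProperWrites B J (dirRun d B J :: P) B' J'

/-- An increasing run writable from the state `(B, J)`, the last written element being
`last?`: each written element is currently buffered and is `≥` the previously written
element, and after each write the next input element (if any) is ingested. -/
inductive IncRunFrom : Option α → List α → List α → List α → Prop
  | nil (last? : Option α) (B J : List α) : IncRunFrom last? B J []
  | cons (last? : Option α) (B J : List α) (x : α) (r : List α) (hx : x ∈ B)
      (hle : ∀ l ∈ last?, l ≤ x)
      (h : IncRunFrom (some x) (B.erase x ++ J.take 1) (J.drop 1) r) :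
      IncRunFrom last? B J (x :: r)

/-- A decreasing run writable from the state `(B, J)`; see `IncRunFrom`. -/
inductive DecRunFrom : Option α → List α → List α → List α → Prop
  | nil (last? : Option α) (B J : List α) : DecRunFrom last? B J []
  | cons (last? : Option α) (B J : List α) (x : α) (r : List α) (hx : x ∈ B)
      (hge : ∀ l ∈ last?, x ≤ l)
      (h : DecRunFrom (some x) (B.erase x ++ J.take 1) (J.drop 1) r) :
      DecRunFrom last? B J (x :: r)

/-- The optimal number of runs over all ways of writing out everything from state `(B, J)`. -/
noncomputable def OPTFrom (B J : List α) : ℕ :=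
  sInf {n | ∃ S : List α, Writes B J S [] [] ∧ RunsInto S n}

/-- Running a deterministic online algorithm `A`: at each step, given the current buffer
(in arrival order) and the output written so far, `A` chooses (the index of) the buffered
element to write next; the next input element is then ingested. -/
def runAlg (A : List α → List α → ℕ) : ℕ → List α → List α → List α → List α
  | 0, _, _, _ => []
  | fuel + 1, W, B, J =>
    match B with
    | [] => []
    | b :: Bt =>
      let i := A (b :: Bt) W % (b :: Bt).length
      let x := (b :: Bt).getD i b
      x :: runAlg A fuel (W ++ [x]) ((b :: Bt).eraseIdx i ++ J.take 1) (J.drop 1)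

/-- The output of the deterministic online algorithm `A` run with buffer size `M` on
input `I`. -/
def onlineOutput (A : List α → List α → ℕ) (M : ℕ) (I : List α) : List α :=
  runAlg A I.length [] (I.take M) (I.drop M)

/-- Running a deterministic algorithm with `v`-lookahead: its choice of which buffered
element to write may additionally depend on the next `v` not-yet-read input elements. -/
def runAlgVis (A : List α → List α → List α → ℕ) (v : ℕ) :
    ℕ → List α → List α → List α → List α
  | 0, _, _, _ => []
  | fuel + 1, W, B, J =>
    match B with
    | [] => []
    | b :: Bt =>
      let i := A (b :: Bt) W (J.take v) % (b :: Bt).length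
      let x := (b :: Bt).getD i b
      x :: runAlgVis A v fuel (W ++ [x]) ((b :: Bt).eraseIdx i ++ J.take 1) (J.drop 1)

/-- The output of the deterministic algorithm `A` with buffer size `M` and `v`-lookahead. -/
def visOutput (A : List α → List α → List α → ℕ) (v M : ℕ) (I : List α) : List α :=
  runAlgVis A v I.length [] (I.take M) (I.drop M)

/-- Alternating up-down replacement selection from a state (starting with an increasing
run when `d = true`), writing maximal runs of strictly alternating directions. -/
def altAux : ℕ → Bool → List α → List α → List α
  | 0, _, _, _ => []
  | fuel + 1, d, B, J =>
    if B = [] then []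
    else dirRun d B J ++ altAux fuel (!d) (dirState d B J).1 (dirState d B J).2

/-- The output of alternating up-down replacement selection with buffer size `M` on `I`. -/
def altOutput (M : ℕ) (I : List α) : List α :=
  altAux (I.length + 1) true (I.take M) (I.drop M)

/-- `GreedyRuns B J P`: `P` is the list of runs written by (some tie-breaking of) the
greedy algorithm from state `(B, J)`: at each decision point it writes the longer of the
two possible maximal runs (ties broken arbitrarily). -/
inductive GreedyRuns : List α → List α → List (List α) → Prop
  | nil : GreedyRuns [] [] []
  | step (d : Bool) (B J : List α) (P : List (List α)) (hB : B ≠ [])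
      (hlen : (dirRun (!d) B J).length ≤ (dirRun d B J).length)
      (h : GreedyRuns (dirState d B J).1 (dirState d B J).2 P) :
      GreedyRuns B J (dirRun d B J :: P)

/-- `PTASOut k B J S`: `S` is a possible output of the phase-based offline approximation
algorithm with parameter `k` from state `(B, J)`: while more than `k` runs remain, it
selects a sequence of `k` consecutive maximal runs writing the longest total number of
elements and writes them, followed by one additional maximal run; once everything can be
written in at most `k` (maximal) runs, it finishes using the fewest possible runs. -/
inductive PTASOut (k : ℕ) : List α → List α → List α → Prop
  | final (B J : List α) (P : List (List α)) (hP : ProperWrites B J P [] [])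
      (hk : P.length ≤ k)
      (hmin : ∀ Q : List (List α), ProperWrites B J Q [] [] → P.length ≤ Q.length) :
      PTASOut k B J P.flatten
  | phase (B J : List α) (P : List (List α)) (B' J' : List α) (r : List α)
      (B'' J'' : List α) (S : List α)
      (hnf : ¬∃ Q : List (List α), ProperWrites B J Q [] [] ∧ Q.length ≤ k)
      (hP : ProperWrites B J P B' J') (hPk : P.length = k)
      (hmax : ∀ (Q : List (List α)) (BQ JQ : List α),
        ProperWrites B J Q BQ JQ → Q.length = k → Q.flatten.length ≤ P.flatten.length)
      (hr : ProperWrites B' J' [r] B'' J'') (hS : PTASOut k B'' J'' S) :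
      PTASOut k B J (P.flatten ++ (r ++ S))

/-- An input is `c`-nearly-sorted (for buffer size `M`) if some proper optimal output
consists entirely of runs of length at least `c * M`. -/
def NearlySorted (c M : ℕ) (I : List α) : Prop :=
  ∃ P : List (List α), ProperWrites (I.take M) (I.drop M) P [] [] ∧
    R P.flatten = OPT M I ∧ ∀ r ∈ P, c * M ≤ r.length

end RunGen

open RunGen

/-!
Take an optimal feasible output and cut it into its runs; say the first run `r` is increasing.
The maximal increasing run starts with the smallest buffered element `x`. Writing `x` first and
deleting it from its later place in the schedule keeps the schedule feasible (the elements in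
between are only delayed), and `x :: r`, with possibly one entry of `r` deleted, is still
increasing since `x` is at most the head of `r`. Repeating this element by element, the schedule
starts with the whole maximal increasing run, and the part after `r` has only lost entries, so it
still splits into as many runs. Induction on the number of runs gives a proper output with at
most `OPT` runs.
-/

namespace RunGen

section Runs

variable {α : Type*} [LinearOrder α]

theorem IsRun.sublist {r r' : List α} (h : IsRun r) (hr' : r'.Sublist r) : IsRun r' :=
  h.imp (·.sublist hr') (·.sublist hr')

theorem RunsInto.sublist {S S' : List α} {n : ℕ} (h : RunsInto S n) (hS' : S'.Sublist S) :
    RunsInto S' n := by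
  obtain ⟨P, rfl, rfl, hP⟩ := h
  induction P generalizing S' with
  | nil => exact ⟨[], by simpa using hS', rfl, by simp⟩
  | cons r P ih =>
    obtain ⟨r', S'', rfl, hr', hS''⟩ := List.sublist_append_iff.mp hS'
    obtain ⟨P', rfl, hlen, hP'⟩ := ih hS'' (fun s hs => hP s (List.mem_cons_of_mem _ hs))
    refine ⟨r' :: P', rfl, by simp [hlen], ?_⟩
    rintro s (_ | ⟨_, hs⟩)
    · exact (hP r List.mem_cons_self).sublist hr'
    · exact hP' s hs

theorem runsInto_length (S : List α) : RunsInto S S.length :=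
  ⟨S.map ([·]), by induction S <;> simp_all, by simp, fun r hr => by
    obtain ⟨a, -, rfl⟩ := List.mem_map.mp hr
    exact .inl (List.isChain_singleton a)⟩

end Runs

namespace Writes

variable {α : Type*} {B J S B' J' : List α} {x : α}

theorem append {S₁ S₂ C K : List α} (h₁ : Writes B J S₁ C K) (h₂ : Writes C K S₂ B' J') :
    Writes B J (S₁ ++ S₂) B' J' := by
  induction h₁ with
  | nil => exact h₂
  | step B J i S _ _ hi _ ih => exact .step B J i _ _ _ hi (ih h₂)

theorem eq_nil_of_nil_left (h : Writes [] J S [] []) : S = [] := by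
  cases h with
  | nil => rfl
  | step _ _ _ _ _ _ hi => simp at hi

variable [DecidableEq α]

theorem cons_of_erase (hx : x ∈ B) (h : Writes (B.erase x ++ J.take 1) (J.drop 1) S B' J') :
    Writes B J (x :: S) B' J' := by
  have hi : B.idxOf x < B.length := List.idxOf_lt_length_iff.mpr hx
  simpa [List.getElem_idxOf] using
    Writes.step B J _ S B' J' hi (by rwa [← List.erase_eq_eraseIdx_of_idxOf rfl])

theorem perm_left {C : List α} (h : Writes B J S [] []) (hBC : B.Perm C) :
    Writes C J S [] [] := by
  induction S generalizing B C J with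
  | nil => cases h; rw [List.nil_perm.mp hBC]; exact .nil _ _
  | cons x S ih =>
    cases h with
    | step _ _ i _ _ _ hi hrest =>
      have hBi : (B.eraseIdx i).Perm (C.erase B[i]) :=
        ((List.getElem_cons_eraseIdx_perm hi).trans
          (hBC.trans (List.perm_cons_erase (hBC.subset (List.getElem_mem hi))))).cons_inv
      exact cons_of_erase (hBC.subset (List.getElem_mem hi)) (ih hrest (hBi.append_right _))

theorem cons_iff : Writes B J (x :: S) [] [] ↔
    x ∈ B ∧ Writes (B.erase x ++ J.take 1) (J.drop 1) S [] [] := by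
  refine ⟨fun h => ?_, fun h => cons_of_erase h.1 h.2⟩
  cases h with
  | step _ _ i _ _ _ hi hrest =>
    have hBi : (B.eraseIdx i).Perm (B.erase B[i]) :=
      ((List.getElem_cons_eraseIdx_perm hi).trans
        (List.perm_cons_erase (List.getElem_mem hi))).cons_inv
    exact ⟨List.getElem_mem hi, hrest.perm_left (hBi.append_right _)⟩

theorem exists_eraseIdx_of_mem (h : Writes B J S [] []) (hx : x ∈ B) :
    ∃ p, S[p]? = some x ∧ Writes (B.erase x ++ J.take 1) (J.drop 1) (S.eraseIdx p) [] [] := by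
  induction S generalizing B J with
  | nil => cases h; simp at hx
  | cons y S ih =>
    obtain ⟨hy, hrest⟩ := cons_iff.mp h
    by_cases hxy : x = y
    · exact ⟨0, by simp [hxy], by simpa [hxy] using hrest⟩
    · have hxB : x ∈ B.erase y := (List.mem_erase_of_ne hxy).mpr hx
      have hyB : y ∈ B.erase x := (List.mem_erase_of_ne (Ne.symm hxy)).mpr hy
      obtain ⟨p, hp, hw⟩ := ih hrest (List.mem_append_left _ hxB)
      refine ⟨p + 1, by simpa using hp, cons_of_erase (List.mem_append_left _ hyB) ?_⟩
      rwa [List.erase_append_left _ hxB, List.erase_comm, ← List.erase_append_left _ hyB] at hw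

end Writes

theorem length_erase_append_take_add {α : Type*} [DecidableEq α] {B J : List α} {x : α}
    (hx : x ∈ B) :
    (B.erase x ++ J.take 1).length + (J.drop 1).length + 1 = B.length + J.length := by
  have := List.length_pos_of_mem hx
  simp only [List.length_append, List.length_erase_of_mem hx, List.length_take, List.length_drop]
  omega

theorem rel_of_isChain_toList_append {α : Type*} {rel : α → α → Prop} {last? : Option α}
    {a : α} {r : List α} (h : (last?.toList ++ a :: r).IsChain rel) : ∀ l ∈ last?, rel l a := by
  rintro l rfl
  exact (List.isChain_cons_cons.mp h).1

section Greedy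

variable {α : Type*} [DecidableEq α]

/-- The common recursion of `incAux` and `decAux`, with the selection rule as a parameter. -/
def greedyAux (next : Option α → List α → Option α) :
    ℕ → Option α → List α → List α → List α × List α × List α
  | 0, _, B, J => ([], B, J)
  | fuel + 1, last?, B, J =>
    match next last? B with
    | none => ([], B, J)
    | some x =>
      let res := greedyAux next fuel (some x) (B.erase x ++ J.take 1) (J.drop 1)
      (x :: res.1, res.2.1, res.2.2)

structure GreedyRule (rel : α → α → Prop) (next : Option α → List α → Option α) : Prop where
  mem {last? B x} : next last? B = some x → x ∈ B
  follows {last? B x} : next last? B = some x → ∀ l ∈ last?, rel l x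
  rel_of_follows {last? B x y} : next last? B = some x → y ∈ B → (∀ l ∈ last?, rel l y) → rel x y
  ne_none {last? B y} : y ∈ B → (∀ l ∈ last?, rel l y) → next last? B ≠ none

variable {rel : α → α → Prop} {next : Option α → List α → Option α}

theorem greedyAux_writes (hnext : GreedyRule rel next) (fuel : ℕ) (last? : Option α)
    (B J : List α) :
    Writes B J (greedyAux next fuel last? B J).1 (greedyAux next fuel last? B J).2.1
      (greedyAux next fuel last? B J).2.2 := by
  induction fuel generalizing last? B J with
  | zero => exact .nil B J
  | succ fuel ih =>
    unfold greedyAux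
    cases h : next last? B with
    | none => exact .nil B J
    | some x => exact .cons_of_erase (hnext.mem h) (ih _ _ _)

theorem isChain_greedyAux (hnext : GreedyRule rel next) (fuel : ℕ) (last? : Option α)
    (B J : List α) : (last?.toList ++ (greedyAux next fuel last? B J).1).IsChain rel := by
  induction fuel generalizing last? B J with
  | zero => cases last? <;> simp [greedyAux]
  | succ fuel ih =>
    unfold greedyAux
    cases h : next last? B with
    | none => cases last? <;> simp
    | some x =>
      have := ih (some x) (B.erase x ++ J.take 1) (J.drop 1)
      cases last? with
      | none => simpa using this
      | some l => exact List.IsChain.cons_cons (hnext.follows h l rfl) (by simpa using this)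

theorem GreedyRule.eq_nil_of_eq_none (hnext : GreedyRule rel next) {last? : Option α}
    {B J r T : List α} (h : next last? B = none) (hw : Writes B J (r ++ T) [] [])
    (hr : (last?.toList ++ r).IsChain rel) : r = [] := by
  cases r with
  | nil => rfl
  | cons a r =>
    exact absurd h (hnext.ne_none (Writes.cons_iff.mp hw).1 (rel_of_isChain_toList_append hr))

theorem GreedyRule.isChain_cons (hnext : GreedyRule rel next) {last? : Option α}
    {B J r T : List α} {x : α} (h : next last? B = some x) (hw : Writes B J (r ++ T) [] [])
    (hr : (last?.toList ++ r).IsChain rel) : (x :: r).IsChain rel := by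
  cases r with
  | nil => exact .singleton x
  | cons a r =>
    exact .cons_cons (hnext.rel_of_follows h (Writes.cons_iff.mp hw).1
      (rel_of_isChain_toList_append hr)) hr.right_of_append

end Greedy

section ProperOutputs

variable {α : Type*} [LinearOrder α] {rel : α → α → Prop} {next : Option α → List α → Option α}

/-- Exchange argument: if a complete schedule from `(B, J)` is a `rel`-chain `r` continuing
`last?` followed by `T`, then after the greedy run everything left can be written with as many
runs as `T`. -/
theorem greedyAux_exchange [Trans rel rel rel] (hnext : GreedyRule rel next) (fuel : ℕ)
    (last? : Option α) (B J r T : List α) (k : ℕ) (hfuel : B.length + J.length ≤ fuel)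
    (hw : Writes B J (r ++ T) [] []) (hr : (last?.toList ++ r).IsChain rel)
    (hT : RunsInto T k) :
    ∃ T', Writes (greedyAux next fuel last? B J).2.1 (greedyAux next fuel last? B J).2.2 T' [] []
      ∧ RunsInto T' k := by
  induction fuel generalizing last? B J r T with
  | zero =>
    obtain ⟨rfl, rfl⟩ : B = [] ∧ J = [] := by simpa using hfuel
    obtain ⟨-, rfl⟩ := List.append_eq_nil_iff.mp hw.eq_nil_of_nil_left
    exact ⟨[], .nil [] [], hT⟩
  | succ fuel ih =>
    unfold greedyAux
    cases h : next last? B with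
    | none =>
      obtain rfl := hnext.eq_nil_of_eq_none h hw hr
      exact ⟨T, hw, hT⟩
    | some x =>
      obtain ⟨p, -, hw'⟩ := hw.exists_eraseIdx_of_mem (hnext.mem h)
      have hfuel' : (B.erase x ++ J.take 1).length + (J.drop 1).length ≤ fuel := by
        have := length_erase_append_take_add (J := J) (hnext.mem h)
        omega
      have hxr : ([x] ++ r).IsChain rel := hnext.isChain_cons h hw hr
      by_cases hp : p < r.length
      · rw [List.eraseIdx_append_of_lt_length hp] at hw'
        exact ih (some x) _ _ _ _ hfuel' hw'
          (hxr.sublist ((List.eraseIdx_sublist r p).cons_cons x)) hT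
      · rw [List.eraseIdx_append_of_length_le (not_lt.mp hp)] at hw'
        exact ih (some x) _ _ _ _ hfuel' hw' hxr (hT.sublist (List.eraseIdx_sublist _ _))

theorem greedyRule_nextUp : GreedyRule (· ≤ ·) (nextUp (α := α)) where
  mem := by
    intro last? B x h
    cases last? <;> simp only [nextUp, List.min?_eq_some_iff, List.mem_filter] at h
    · exact h.1
    · exact h.1.1
  follows := by
    intro last? B x h
    cases last? <;> simp_all [nextUp, List.min?_eq_some_iff]
  rel_of_follows := by
    intro last? B x y h hy hly
    cases last? <;> simp_all [nextUp, List.min?_eq_some_iff]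
  ne_none := by
    intro last? B y hy hly
    cases last? <;> simp only [nextUp, ne_eq, List.min?_eq_none_iff, List.filter_eq_nil_iff]
    · rintro rfl; simp at hy
    · simpa using ⟨y, hy, hly _ rfl⟩

theorem greedyRule_nextDown : GreedyRule (· ≥ ·) (nextDown (α := α)) where
  mem := by
    intro last? B x h
    cases last? <;> simp only [nextDown, List.max?_eq_some_iff, List.mem_filter] at h
    · exact h.1
    · exact h.1.1
  follows := by
    intro last? B x h
    cases last? <;> simp_all [nextDown, List.max?_eq_some_iff]
  rel_of_follows := by
    intro last? B x y h hy hly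
    cases last? <;> simp_all [nextDown, List.max?_eq_some_iff]
  ne_none := by
    intro last? B y hy hly
    cases last? <;> simp only [nextDown, ne_eq, List.max?_eq_none_iff, List.filter_eq_nil_iff]
    · rintro rfl; simp at hy
    · simpa using ⟨y, hy, hly _ rfl⟩

theorem incAux_eq_greedyAux : @incAux α _ = greedyAux nextUp := by
  funext fuel last? B J
  induction fuel generalizing last? B J with
  | zero => rfl
  | succ fuel ih => simp only [incAux, greedyAux, ih]

theorem decAux_eq_greedyAux : @decAux α _ = greedyAux nextDown := by
  funext fuel last? B J
  induction fuel generalizing last? B J with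
  | zero => rfl
  | succ fuel ih => simp only [decAux, greedyAux, ih]

theorem dirRun_eq (d : Bool) (B J : List α) :
    dirRun d B J = (greedyAux (cond d nextUp nextDown) (B.length + J.length) none B J).1 := by
  cases d <;> simp [dirRun, maxIncRun, maxDecRun, incAux_eq_greedyAux, decAux_eq_greedyAux]

theorem dirState_eq (d : Bool) (B J : List α) :
    dirState d B J = (greedyAux (cond d nextUp nextDown) (B.length + J.length) none B J).2 := by
  cases d <;> simp [dirState, incState, decState, incAux_eq_greedyAux, decAux_eq_greedyAux]

theorem writes_dirRun (d : Bool) (B J : List α) :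
    Writes B J (dirRun d B J) (dirState d B J).1 (dirState d B J).2 := by
  rw [dirRun_eq, dirState_eq]
  cases d
  · exact greedyAux_writes greedyRule_nextDown ..
  · exact greedyAux_writes greedyRule_nextUp ..

theorem isRun_dirRun (d : Bool) (B J : List α) : IsRun (dirRun d B J) := by
  rw [dirRun_eq]
  cases d
  · exact .inr (isChain_greedyAux greedyRule_nextDown _ none B J)
  · exact .inl (isChain_greedyAux greedyRule_nextUp _ none B J)

theorem exists_writes_dirState {B J r T : List α} {k : ℕ} (hw : Writes B J (r ++ T) [] [])
    (hr : IsRun r) (hT : RunsInto T k) :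
    ∃ d T', Writes (dirState d B J).1 (dirState d B J).2 T' [] [] ∧ RunsInto T' k := by
  simp only [dirState_eq]
  rcases hr with hr | hr
  · exact ⟨true, greedyAux_exchange greedyRule_nextUp _ none B J r T k le_rfl hw hr hT⟩
  · exact ⟨false, greedyAux_exchange greedyRule_nextDown _ none B J r T k le_rfl hw hr hT⟩

theorem ProperWrites.writes {B J B' J' : List α} {P : List (List α)}
    (h : ProperWrites B J P B' J') : Writes B J P.flatten B' J' := by
  induction h with
  | nil B J => exact .nil B J
  | step d B J P _ _ _ _ ih => exact (writes_dirRun d B J).append ih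

theorem ProperWrites.runsInto {B J B' J' : List α} {P : List (List α)}
    (h : ProperWrites B J P B' J') : RunsInto P.flatten P.length := by
  refine ⟨P, rfl, rfl, ?_⟩
  induction h with
  | nil => simp
  | step d B J P _ _ _ _ ih =>
    rintro r (_ | ⟨_, hr⟩)
    exacts [isRun_dirRun d B J, ih r hr]

theorem exists_properWrites_of_runsInto {B J S : List α} {k : ℕ} (hw : Writes B J S [] [])
    (hS : RunsInto S k) : ∃ P, ProperWrites B J P [] [] ∧ P.length ≤ k := by
  induction k generalizing B J S with
  | zero =>
    obtain ⟨P, rfl, hP, -⟩ := hS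
    obtain rfl := List.length_eq_zero_iff.mp hP
    cases hw
    exact ⟨[], .nil [] [], le_rfl⟩
  | succ k ih =>
    obtain ⟨_ | ⟨r, Q⟩, rfl, hlen, hQ⟩ := hS
    · simp at hlen
    by_cases hB : B = []
    · subst hB
      rw [hw.eq_nil_of_nil_left] at hw
      cases hw
      exact ⟨[], .nil [] [], Nat.zero_le _⟩
    have hQk : RunsInto Q.flatten k :=
      ⟨Q, rfl, by simpa using hlen, fun s hs => hQ s (List.mem_cons_of_mem _ hs)⟩
    obtain ⟨d, T, hT, hTk⟩ := exists_writes_dirState hw (hQ r List.mem_cons_self) hQk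
    obtain ⟨P, hP, hPk⟩ := ih hT hTk
    exact ⟨_ :: P, .step d B J P [] [] hB hP, by simpa using hPk⟩

end ProperOutputs

namespace Writes

variable {α β : Type*} {B J S B' J' : List α}

theorem map (f : α → β) (h : Writes B J S B' J') :
    Writes (B.map f) (J.map f) (S.map f) (B'.map f) (J'.map f) := by
  induction h with
  | nil B J => exact .nil _ _
  | step B J i S _ _ hi _ ih =>
    have := Writes.step (B.map f) (J.map f) i _ _ _ (by simpa using hi)
      (by rwa [List.eraseIdx_map, ← List.map_take, ← List.map_drop, ← List.map_append])
    rwa [List.getElem_map] at this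

theorem exists_map_eq {f : α → β} {S : List β} (h : Writes (B.map f) (J.map f) S [] []) :
    ∃ S₀, Writes B J S₀ [] [] ∧ S₀.map f = S := by
  generalize hB : B.map f = B₁ at h
  generalize hJ : J.map f = J₁ at h
  induction S generalizing B J B₁ J₁ with
  | nil =>
    cases h
    obtain rfl := List.map_eq_nil_iff.mp hB
    obtain rfl := List.map_eq_nil_iff.mp hJ
    exact ⟨[], .nil [] [], rfl⟩
  | cons y S ih =>
    cases h with
    | step _ _ i _ _ _ hi hrest =>
      subst hB hJ
      have hi' : i < B.length := by simpa using hi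
      obtain ⟨S₀, hS₀, rfl⟩ := ih (B := B.eraseIdx i ++ J.take 1) (J := J.drop 1) _
        (by rw [List.map_append, List.map_take, List.eraseIdx_map]) _ (List.map_drop ..) hrest
      exact ⟨B[i] :: S₀, .step B J i S₀ [] [] hi' hS₀, by simp⟩

theorem perm (h : Writes B J S B' J') : (S ++ B' ++ J').Perm (B ++ J) := by
  induction h with
  | nil => rfl
  | step B J i S _ _ hi _ ih =>
    rw [List.append_assoc (B.eraseIdx i), List.take_append_drop] at ih
    simpa using (ih.cons B[i]).trans ((List.getElem_cons_eraseIdx_perm hi).append_right J)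

theorem getElem_mem (h : Writes B J S B' J') (t : ℕ) (ht : t < S.length) :
    S[t] ∈ B ++ J.take t := by
  induction h generalizing t with
  | nil => simp at ht
  | step B J i S _ _ hi _ ih =>
    cases t with
    | zero => simp [List.getElem_mem]
    | succ t =>
      have := ih t (by simpa using ht)
      rw [List.append_assoc] at this
      rw [List.getElem_cons_succ, Nat.add_comm, List.take_add]
      exact ((List.eraseIdx_sublist B i).append_right _).subset this

theorem of_nodup [DecidableEq α] (hnd : (B ++ J).Nodup) (hS : S.Perm (B ++ J))
    (hS_mem : ∀ t (ht : t < S.length), S[t] ∈ B ++ J.take t) : Writes B J S [] [] := by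
  induction S generalizing B J with
  | nil =>
    obtain ⟨rfl, rfl⟩ := List.append_eq_nil_iff.mp (List.nil_perm.mp hS)
    exact .nil [] []
  | cons x S ih =>
    have hx : x ∈ B := by simpa using hS_mem 0 (Nat.succ_pos _)
    have hxS : x ∉ S := (List.nodup_cons.mp (hS.nodup_iff.mpr hnd)).1
    have hBJ : B.erase x ++ J.take 1 ++ J.drop 1 = (B ++ J).erase x := by
      rw [List.append_assoc, List.take_append_drop, List.erase_append_left _ hx]
    refine cons_of_erase hx (ih (by rw [hBJ]; exact hnd.erase x)
      (by rw [hBJ]; simpa using hS.erase x) fun t ht => ?_)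
    have hne : S[t] ≠ x := fun h => hxS (h ▸ List.getElem_mem ht)
    have hmem := hS_mem (t + 1) (by simpa using ht)
    rw [List.append_assoc, ← List.take_add, Nat.add_comm]
    rcases List.mem_append.mp (by simpa using hmem) with h | h
    · exact List.mem_append_left _ ((List.mem_erase_of_ne hne).mpr h)
    · exact List.mem_append_right _ h

theorem iff_of_nodup [DecidableEq α] (hnd : (B ++ J).Nodup) :
    Writes B J S [] [] ↔ S.Perm (B ++ J) ∧ ∀ t (ht : t < S.length), S[t] ∈ B ++ J.take t :=
  ⟨fun h => ⟨by simpa using h.perm, h.getElem_mem⟩, fun h => of_nodup hnd h.1 h.2⟩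

end Writes

theorem mem_take_finRange {n k : ℕ} {i : Fin n} : i ∈ (List.finRange n).take k ↔ (i : ℕ) < k := by
  simp only [List.mem_take_iff_getElem, List.getElem_finRange, List.length_finRange, lt_min_iff]
  exact ⟨fun ⟨j, hj, hji⟩ => hji ▸ hj.1, fun h => ⟨i, ⟨h, i.2⟩, rfl⟩⟩

theorem writes_finRange_iff {n M : ℕ} {S : List (Fin n)} :
    Writes ((List.finRange n).take M) ((List.finRange n).drop M) S [] [] ↔
      S.Perm (List.finRange n) ∧ ∀ t (ht : t < S.length), (S[t] : ℕ) < M + t := by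
  rw [Writes.iff_of_nodup (by rw [List.take_append_drop]; exact List.nodup_finRange n)]
  simp only [List.take_append_drop, ← List.take_add, mem_take_finRange]

theorem isFeasibleOutput_iff_writes {α : Type*} {M : ℕ} {I S : List α} :
    IsFeasibleOutput M I S ↔ Writes (I.take M) (I.drop M) S [] [] := by
  have hI : (List.finRange I.length).map I.get = I := List.map_get_finRange I
  constructor
  · rintro ⟨hlen, σ, hσ⟩
    have hS : (List.ofFn σ).map I.get = S := by
      refine List.ext_getElem (by simp [hlen]) fun t h₁ h₂ => ?_
      have := (hσ ⟨t, hlen ▸ h₂⟩).1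
      rw [List.getElem?_eq_getElem h₂, List.getElem?_eq_getElem (σ _).2] at this
      simpa using (Option.some_inj.mp this).symm
    have hperm : (List.ofFn σ).Perm (List.finRange I.length) :=
      (List.perm_ext_iff_of_nodup (List.nodup_ofFn.mpr σ.injective) (List.nodup_finRange _)).mpr
        (by simpa using fun a => σ.surjective a)
    have hbound : ∀ t (ht : t < (List.ofFn σ).length), ((List.ofFn σ)[t] : ℕ) < M + t :=
      fun t ht => by simpa using (hσ ⟨t, by simpa using ht⟩).2
    have hw := (writes_finRange_iff.mpr ⟨hperm, hbound⟩).map I.get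
    rwa [List.map_take, List.map_drop, hI, hS, List.map_nil] at hw
  · intro hw
    rw [← hI, ← List.map_take, ← List.map_drop] at hw
    obtain ⟨S₀, hS₀, rfl⟩ := hw.exists_map_eq
    obtain ⟨hperm, hbound⟩ := writes_finRange_iff.mp hS₀
    have hlen : S₀.length = I.length := by simpa using hperm.length_eq
    let σ : Fin I.length ≃ Fin I.length := (finCongr hlen.symm).trans
      (List.Nodup.getEquivOfForallMemList S₀ (hperm.nodup_iff.mpr (List.nodup_finRange _))
        fun i => hperm.mem_iff.mpr (List.mem_finRange i))
    have hσ : ∀ t, σ t = S₀[(t : ℕ)] := fun t => by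
      simp [σ, List.Nodup.getEquivOfForallMemList_apply]
    refine ⟨by simp [hlen], σ, fun t => ?_⟩
    rw [hσ]
    have ht : (t : ℕ) < S₀.length := hlen.symm ▸ t.2
    exact ⟨by simp [List.getElem?_eq_getElem ht], hbound t ht⟩

theorem isFeasibleOutput_self {α : Type*} {M : ℕ} (hM : 0 < M) (I : List α) :
    IsFeasibleOutput M I I :=
  ⟨rfl, .refl _, fun t => ⟨rfl, by simp only [Equiv.refl_apply]; omega⟩⟩

section Optimal

variable {α : Type*} [LinearOrder α]

theorem R_le {S : List α} {n : ℕ} (h : RunsInto S n) : R S ≤ n :=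
  Nat.sInf_le h

theorem runsInto_R {S : List α} {n : ℕ} (h : RunsInto S n) : RunsInto S (R S) :=
  Nat.sInf_mem (s := {n | RunsInto S n}) ⟨n, h⟩

theorem OPT_le {M n : ℕ} {I S : List α} (hS : IsFeasibleOutput M I S) (h : RunsInto S n) :
    OPT M I ≤ n :=
  Nat.sInf_le ⟨S, hS, h⟩

theorem exists_runsInto_OPT {M : ℕ} (hM : 0 < M) (I : List α) :
    ∃ S, IsFeasibleOutput M I S ∧ RunsInto S (OPT M I) :=
  Nat.sInf_mem (s := {n | ∃ S, IsFeasibleOutput M I S ∧ RunsInto S n})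
    ⟨I.length, I, isFeasibleOutput_self hM I, runsInto_length I⟩

end Optimal

end RunGen

/-- For every input `I` and buffer size `M`, there is a proper `M`-feasible output
(one generated by writing maximal runs throughout) achieving `OPT M I` runs. -/
theorem stmt_2 {α : Type*} [LinearOrder α] (M : ℕ) (hM : 0 < M) (I : List α) :
    ∃ P : List (List α),
      ProperWrites (I.take M) (I.drop M) P [] [] ∧
      IsFeasibleOutput M I P.flatten ∧
      R P.flatten = OPT M I := by
  obtain ⟨S, hS, hSopt⟩ := exists_runsInto_OPT hM I
  obtain ⟨P, hP, hPlen⟩ :=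
    exists_properWrites_of_runsInto (isFeasibleOutput_iff_writes.mp hS) hSopt
  have hPfeas : IsFeasibleOutput M I P.flatten := isFeasibleOutput_iff_writes.mpr hP.writes
  exact ⟨P, hP, hPfeas,
    le_antisymm ((R_le hP.runsInto).trans hPlen) (OPT_le hPfeas (runsInto_R hP.runsInto))⟩
end

section
/- Let I_1 and I_2 be inputs with I_2 a subsequence of I_1. Let S_1 and S_2 be proper outputs (with buffer size M) of I_1 and I_2 whose initial runs r_1 and r_2 are maximal runs in the same direction (both increasing or both decreasing). Let I_1' and I_2' be the unwritten-element sequences after r_1 and r_2 respectively. Then I_2' is a subsequence of I_1'. -/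
namespace List

section Erase

variable {β : Type*} [BEq β] [LawfulBEq β]

theorem erase_eq_erase_take_append_drop {S : List β} {x : β} {n : ℕ} (hx : x ∈ S.take n) :
    S.erase x = (S.take n).erase x ++ S.drop n := by
  conv_lhs => rw [← take_append_drop n S]
  exact erase_append_left _ hx

theorem take_pred_erase_of_mem_take {S : List β} {x : β} {n : ℕ} (hx : x ∈ S.take n) :
    (S.erase x).take (n - 1) = (S.take n).erase x := by
  have hlen : ((S.take n).erase x).length = min n S.length - 1 := by
    rw [length_erase_of_mem hx, length_take]
  rw [erase_eq_erase_take_append_drop hx]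
  rcases Nat.lt_or_ge S.length n with hlt | hle
  · rw [drop_eq_nil_of_le hlt.le, append_nil, take_of_length_le (by omega)]
  · rw [take_append_of_le_length (by omega), take_of_length_le (by omega)]

theorem drop_pred_erase_of_mem_take {S : List β} {x : β} {n : ℕ} (hx : x ∈ S.take n) :
    (S.erase x).drop (n - 1) = S.drop n := by
  have hlen : ((S.take n).erase x).length = min n S.length - 1 := by
    rw [length_erase_of_mem hx, length_take]
  rw [erase_eq_erase_take_append_drop hx]
  rcases Nat.lt_or_ge S.length n with hlt | hle
  · rw [drop_eq_nil_of_le hlt.le, append_nil, drop_eq_nil_of_le (by omega)]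
  · rw [drop_append_of_le_length (by omega), drop_of_length_le (by omega), nil_append]

theorem take_erase_of_mem_take {S : List β} {x : β} {M : ℕ} (hx : x ∈ S.take M) :
    (S.erase x).take M = (S.take M).erase x ++ (S.drop M).take 1 := by
  have hx' : x ∈ S.take (M + 1) := take_sublist_take_left (by omega) |>.subset hx
  simpa [take_add, erase_append_left _ hx] using take_pred_erase_of_mem_take hx'

theorem drop_erase_of_mem_take {S : List β} {x : β} {M : ℕ} (hx : x ∈ S.take M) :
    (S.erase x).drop M = (S.drop M).drop 1 := by
  have hx' : x ∈ S.take (M + 1) := take_sublist_take_left (by omega) |>.subset hx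
  simpa [drop_drop] using drop_pred_erase_of_mem_take hx'

theorem length_erase_lt_of_mem {L : List β} {x : β} (hx : x ∈ L) :
    (L.erase x).length < L.length := by
  rw [length_erase_of_mem hx]
  exact Nat.sub_lt (length_pos_of_mem hx) Nat.one_pos

theorem sublist_erase_of_not_mem {L S : List β} {x : β} (h : L <+ S) (hx : x ∉ L) :
    L <+ S.erase x := by
  simpa [erase_of_not_mem hx] using h.erase x

end Erase

variable {β : Type*}

theorem filter_sublist_filter_of_imp {p q : β → Bool} {L : List β}
    (h : ∀ b ∈ L, q b → p b) : L.filter q <+ L.filter p := by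
  induction L with
  | nil => exact .slnil
  | cons a L ih =>
    have ih := ih fun b hb => h b (mem_cons_of_mem a hb)
    by_cases hq : q a
    · simpa [filter_cons, hq, h a mem_cons_self hq] using ih
    · by_cases hp : p a <;> simp [hq, hp, ih, ih.trans (sublist_cons_self _ _)]

theorem Sublist.exists_take_drop {L S : List β} (h : L <+ S) (M : ℕ) :
    ∃ n, M ≤ n ∧ L.take M <+ S.take n ∧ L.drop M <+ S.drop n := by
  obtain ⟨P, Q, rfl, hP, hQ⟩ := append_sublist_iff.1 ((take_append_drop M L).symm ▸ h)
  refine ⟨max M P.length, le_max_left _ _, ?_, ?_⟩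
  · rw [take_append, take_of_length_le (le_max_right _ _)]
    exact hP.trans (sublist_append_left _ _)
  · rcases le_or_gt L.length M with hL | hL
    · simp [drop_eq_nil_of_le hL]
    · have hMP : M ≤ P.length := by simpa [length_take, hL.le] using hP.length_le
      simpa [max_eq_right hMP] using hQ

theorem Sublist.exists_take_drop_ingest {G J S : List β} {m : ℕ} (hG : G <+ S.take m)
    (hJ : J <+ S.drop m) :
    ∃ m', m < m' ∧ G ++ J.take 1 <+ S.take m' ∧ J.drop 1 <+ S.drop m' := by
  cases J with
  | nil =>
    exact ⟨m + 1, by omega, by simpa using hG.trans (take_sublist_take_left (by omega)), by simp⟩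
  | cons j J =>
    obtain ⟨C, D, hCD, hjC, hJD⟩ := cons_sublist_iff.1 hJ
    refine ⟨m + C.length, by simpa using length_pos_of_mem hjC, ?_, ?_⟩
    · rw [take_add, hCD, take_left]
      exact hG.append (singleton_sublist.2 hjC)
    · rw [← drop_drop, hCD, drop_left]
      exact hJD

end List

namespace RunGen

open scoped List

variable {α : Type*} [LinearOrder α]

theorem nextUp_eq_some_iff {l : WithBot α} {B : List α} {x : α} :
    nextUp l B = some x ↔ x ∈ B ∧ l ≤ x ∧ ∀ b ∈ B, l ≤ b → x ≤ b := by
  cases l with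
  | bot => simp [nextUp, List.min?_eq_some_iff]
  | coe l => simp [nextUp, List.min?_eq_some_iff, and_assoc]

theorem nextUp_eq_none_iff {l : WithBot α} {B : List α} :
    nextUp l B = none ↔ ∀ b ∈ B, (b : WithBot α) < l := by
  cases l with
  | bot => simp [nextUp, List.eq_nil_iff_forall_not_mem]
  | coe l => simp [nextUp]

theorem mem_of_nextUp_eq_some {l : WithBot α} {B : List α} {x : α}
    (h : nextUp l B = some x) : x ∈ B :=
  (nextUp_eq_some_iff.1 h).1

theorem exists_nextUp_eq_some_le {l : WithBot α} {B : List α} {b : α} (hb : b ∈ B)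
    (hlb : l ≤ b) : ∃ y, nextUp l B = some y ∧ y ≤ b := by
  cases hy : nextUp l B with
  | none => exact absurd hlb (nextUp_eq_none_iff.1 hy b hb).not_ge
  | some y => exact ⟨y, rfl, (nextUp_eq_some_iff.1 hy).2.2 b hb hlb⟩

/-- The unwritten-element sequence left by the maximal increasing run from the state with
unwritten-element sequence `S` (so buffer `S.take M`) and last written element `l`
(`⊥` when nothing has been written yet). -/
def incRest (M : ℕ) (l : WithBot α) (S : List α) : List α :=
  match h : nextUp l (S.take M) with
  | none => S
  | some x =>
    have := List.length_erase_lt_of_mem (List.mem_of_mem_take (mem_of_nextUp_eq_some h))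
    incRest M x (S.erase x)
termination_by S.length

variable {M : ℕ}

theorem incRest_of_nextUp_eq_none {l : WithBot α} {S : List α}
    (h : nextUp l (S.take M) = none) : incRest M l S = S := by
  rw [incRest]; split <;> simp_all

theorem incRest_of_nextUp_eq_some {l : WithBot α} {S : List α} {x : α}
    (h : nextUp l (S.take M) = some x) : incRest M l S = incRest M x (S.erase x) := by
  rw [incRest]; split <;> simp_all

theorem incRest_sublist (l : WithBot α) (S : List α) : incRest M l S <+ S := by
  cases h : nextUp l (S.take M) with
  | none => rw [incRest_of_nextUp_eq_none h]
  | some x =>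
    have := List.length_erase_lt_of_mem (List.mem_of_mem_take (mem_of_nextUp_eq_some h))
    rw [incRest_of_nextUp_eq_some h]
    exact (incRest_sublist _ _).trans List.erase_sublist
termination_by S.length

theorem incAux_take_drop {fuel : ℕ} {l : WithBot α} {S : List α} (hS : S.length ≤ fuel) :
    (incAux fuel l (S.take M) (S.drop M)).2.1 ++ (incAux fuel l (S.take M) (S.drop M)).2.2 =
      incRest M l S := by
  induction fuel generalizing l S with
  | zero =>
    obtain rfl : S = [] := List.eq_nil_of_length_eq_zero (by omega)
    rw [incRest_of_nextUp_eq_none (nextUp_eq_none_iff.2 (by simp))]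
    simp [incAux]
  | succ fuel ih =>
    cases h : nextUp l (S.take M) with
    | none => simp [incAux, h, incRest_of_nextUp_eq_none h]
    | some x =>
      have hx := mem_of_nextUp_eq_some h
      have hlen := List.length_erase_lt_of_mem (List.mem_of_mem_take hx)
      simp only [incAux, h]
      rw [incRest_of_nextUp_eq_some h, ← ih (by omega), List.take_erase_of_mem_take hx,
        List.drop_erase_of_mem_take hx]
      rfl

theorem incState_append (M : ℕ) (I : List α) :
    (incState (I.take M) (I.drop M)).1 ++ (incState (I.take M) (I.drop M)).2 = incRest M ⊥ I :=
  incAux_take_drop (by simp; omega)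

/-- The buffered elements of `S₂` in `[l₂, l₁]` are left out of the embedding: the run from
`(l₂, S₂)` is bound to write them before it stops. Everything up to `n` counts as read in `S₁`,
so unread elements of `S₂` go to unread ones. -/
def Trails (M : ℕ) (l₂ : WithBot α) (S₂ : List α) (l₁ : WithBot α) (S₁ : List α) : Prop :=
  l₂ ≤ l₁ ∧ ∃ n, M ≤ n ∧
    (S₂.take M).filter (fun b : α => (b : WithBot α) ∉ Set.Icc l₂ l₁) <+ S₁.take n ∧
    S₂.drop M <+ S₁.drop n

theorem trails_of_sublist {I₁ I₂ : List α} (h : I₂ <+ I₁) : Trails M ⊥ I₂ ⊥ I₁ := by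
  refine ⟨le_rfl, ?_⟩
  simpa using h.exists_take_drop M

section Step

variable {l₁ l₂ : WithBot α} {S₁ S₂ : List α}

theorem Trails.write_trailing {y : α} (h : Trails M l₂ S₂ l₁ S₁)
    (hy : nextUp l₂ (S₂.take M) = some y) (hyl : (y : WithBot α) ≤ l₁) :
    Trails M y (S₂.erase y) l₁ S₁ := by
  obtain ⟨-, n, hMn, hG, hJ⟩ := h
  obtain ⟨hyw, -, hymin⟩ := nextUp_eq_some_iff.1 hy
  obtain ⟨n', hnn', hG', hJ'⟩ := hG.exists_take_drop_ingest hJ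
  refine ⟨hyl, n', by omega, ?_, by rwa [List.drop_erase_of_mem_take hyw]⟩
  rw [List.take_erase_of_mem_take hyw, List.filter_append]
  refine List.Sublist.trans (List.Sublist.append ?_ List.filter_sublist) hG'
  refine (List.erase_sublist.filter _).trans (List.filter_sublist_filter_of_imp ?_)
  intro b hb
  simp only [decide_eq_true_eq]
  exact fun hyb hlb => hyb ⟨WithBot.coe_le_coe.2 (hymin b hb hlb.1), hlb.2⟩

theorem Trails.write_both {x y : α} (h : Trails M l₂ S₂ l₁ S₁)
    (hx : nextUp l₁ (S₁.take M) = some x) (hy : nextUp l₂ (S₂.take M) = some y) (hyx : y ≤ x) :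
    Trails M y (S₂.erase y) x (S₁.erase x) := by
  obtain ⟨-, n, hMn, hG, hJ⟩ := h
  obtain ⟨hxw, hlx, -⟩ := nextUp_eq_some_iff.1 hx
  obtain ⟨hyw, -, hymin⟩ := nextUp_eq_some_iff.1 hy
  have hxn : x ∈ S₁.take n := (List.take_sublist_take_left hMn).subset hxw
  set G' := ((S₂.take M).erase y).filter
    (fun b : α => (b : WithBot α) ∉ Set.Icc (y : WithBot α) x)
  have hG' : G' <+ (S₁.erase x).take (n - 1) := by
    rw [List.take_pred_erase_of_mem_take hxn]
    refine List.sublist_erase_of_not_mem ?_ (by simp [G', hyx])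
    refine ((List.erase_sublist.filter _).trans (List.filter_sublist_filter_of_imp ?_)).trans hG
    intro b hb
    simp only [decide_eq_true_eq]
    exact fun hyb hlb => hyb ⟨WithBot.coe_le_coe.2 (hymin b hb hlb.1), hlb.2.trans hlx⟩
  rw [← List.drop_pred_erase_of_mem_take hxn] at hJ
  obtain ⟨n', hnn', hG'', hJ'⟩ := hG'.exists_take_drop_ingest hJ
  refine ⟨WithBot.coe_le_coe.2 hyx, n', by omega, ?_, by rwa [List.drop_erase_of_mem_take hyw]⟩
  rw [List.take_erase_of_mem_take hyw, List.filter_append]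
  exact (List.Sublist.append (.refl _) List.filter_sublist).trans hG''

theorem Trails.exists_take_drop (h : Trails M l₂ S₂ l₁ S₁)
    (hfree : ∀ b ∈ S₂.take M, (b : WithBot α) ∉ Set.Icc l₂ l₁) :
    ∃ n, M ≤ n ∧ S₂.take M <+ S₁.take n ∧ S₂.drop M <+ S₁.drop n := by
  obtain ⟨-, n, hMn, hG, hJ⟩ := h
  rw [List.filter_eq_self.2 fun b hb => decide_eq_true (hfree b hb)] at hG
  exact ⟨n, hMn, hG, hJ⟩

theorem Trails.write_leading {x : α} (h : Trails M l₂ S₂ l₁ S₁)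
    (hfree : ∀ b ∈ S₂.take M, (b : WithBot α) ∉ Set.Icc l₂ l₁)
    (hx : nextUp l₁ (S₁.take M) = some x) (hxw : x ∉ S₂.take M) :
    Trails M l₂ S₂ x (S₁.erase x) := by
  have hl := h.1
  obtain ⟨n, hMn, hG, hJ⟩ := h.exists_take_drop hfree
  obtain ⟨hx₁, hlx, -⟩ := nextUp_eq_some_iff.1 hx
  have hxn : x ∈ S₁.take n := (List.take_sublist_take_left hMn).subset hx₁
  have hG' : (S₂.take M).filter (fun b : α => (b : WithBot α) ∉ Set.Icc l₂ x) <+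
      (S₁.erase x).take (n - 1) := by
    rw [List.take_pred_erase_of_mem_take hxn]
    exact List.sublist_erase_of_not_mem (List.filter_sublist.trans hG)
      (fun hx' => hxw (List.mem_of_mem_filter hx'))
  refine ⟨hl.trans hlx, ?_⟩
  by_cases hJnil : S₂.drop M = []
  · exact ⟨n, hMn, hG'.trans (List.take_sublist_take_left (by omega)), by simp [hJnil]⟩
  · -- if `n = M`, the full trailing buffer would be the leading buffer, which contains `x`
    have hMn' : M < n := by
      refine lt_of_le_of_ne hMn fun hnM => hxw ?_
      subst hnM
      have hlen : (S₁.take M).length ≤ (S₂.take M).length := by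
        have : M < S₂.length := by simpa using hJnil
        simp only [List.length_take]
        omega
      exact hG.eq_of_length_le hlen ▸ hx₁
    exact ⟨n - 1, by omega, hG', by rwa [List.drop_pred_erase_of_mem_take hxn]⟩

end Step

theorem Trails.incRest_sublist {l₁ l₂ : WithBot α} {S₁ S₂ : List α}
    (h : Trails M l₂ S₂ l₁ S₁) : incRest M l₂ S₂ <+ incRest M l₁ S₁ := by
  by_cases hcatch : ∃ y, nextUp l₂ (S₂.take M) = some y ∧ (y : WithBot α) ≤ l₁
  · obtain ⟨y, hy, hyl⟩ := hcatch
    have := List.length_erase_lt_of_mem (List.mem_of_mem_take (mem_of_nextUp_eq_some hy))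
    rw [incRest_of_nextUp_eq_some hy]
    exact (h.write_trailing hy hyl).incRest_sublist
  have hfree : ∀ b ∈ S₂.take M, (b : WithBot α) ∉ Set.Icc l₂ l₁ := by
    rintro b hb ⟨hlb, hbl⟩
    obtain ⟨y, hy, hyb⟩ := exists_nextUp_eq_some_le hb hlb
    exact hcatch ⟨y, hy, (WithBot.coe_le_coe.2 hyb).trans hbl⟩
  cases hx : nextUp l₁ (S₁.take M) with
  | none =>
    obtain ⟨n, -, hG, hJ⟩ := h.exists_take_drop hfree
    rw [incRest_of_nextUp_eq_none hx]
    refine (RunGen.incRest_sublist l₂ S₂).trans ?_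
    simpa using hG.append hJ
  | some x =>
    have := List.length_erase_lt_of_mem (List.mem_of_mem_take (mem_of_nextUp_eq_some hx))
    rw [incRest_of_nextUp_eq_some hx]
    by_cases hxw : x ∈ S₂.take M
    · obtain ⟨y, hy, hyx⟩ :=
        exists_nextUp_eq_some_le hxw (h.1.trans (nextUp_eq_some_iff.1 hx).2.1)
      have := List.length_erase_lt_of_mem (List.mem_of_mem_take (mem_of_nextUp_eq_some hy))
      rw [incRest_of_nextUp_eq_some hy]
      exact (h.write_both hx hy hyx).incRest_sublist
    · exact (h.write_leading hfree hx hxw).incRest_sublist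
termination_by S₁.length + S₂.length

theorem incRest_bot_sublist (M : ℕ) {I₁ I₂ : List α} (h : I₂ <+ I₁) :
    incRest M ⊥ I₂ <+ incRest M ⊥ I₁ :=
  (trails_of_sublist h).incRest_sublist

theorem decAux_eq_incAux_toDual (fuel : ℕ) (l : Option α) (B J : List α) :
    decAux fuel l B J = incAux (α := αᵒᵈ) fuel l B J := by
  induction fuel generalizing l B J with
  | zero => rfl
  | succ fuel ih =>
    have : nextDown l B = nextUp (α := αᵒᵈ) l B := by cases l <;> rfl
    simp only [decAux, incAux, this, ih]
    rfl

theorem decState_append (M : ℕ) (I : List α) :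
    (decState (I.take M) (I.drop M)).1 ++ (decState (I.take M) (I.drop M)).2 =
      incRest (α := αᵒᵈ) M ⊥ I := by
  rw [decState, decAux_eq_incAux_toDual]
  exact incState_append (α := αᵒᵈ) M I

end RunGen

open RunGen

/-- If `I₂` is a subsequence of `I₁` and both initial maximal runs are taken in the same
direction (both increasing, or both decreasing), then the unwritten-element sequence of
`I₂` after its first maximal run is a subsequence of that of `I₁`. -/
theorem stmt_5 {α : Type*} [LinearOrder α] (M : ℕ) (I₁ I₂ : List α)
    (hsub : I₂.Sublist I₁) :
    (((incState (I₂.take M) (I₂.drop M)).1 ++ (incState (I₂.take M) (I₂.drop M)).2).Sublist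
      ((incState (I₁.take M) (I₁.drop M)).1 ++ (incState (I₁.take M) (I₁.drop M)).2)) ∧
    (((decState (I₂.take M) (I₂.drop M)).1 ++ (decState (I₂.take M) (I₂.drop M)).2).Sublist
      ((decState (I₁.take M) (I₁.drop M)).1 ++ (decState (I₁.take M) (I₁.drop M)).2)) := by
  rw [incState_append, incState_append, decState_append, decState_append]
  exact ⟨incRest_bot_sublist M hsub, incRest_bot_sublist (α := αᵒᵈ) M hsub⟩
end

section
/- Every run written by the greedy run-generation algorithm with buffer size M, except possibly its last two runs, has length at least M + ⌈⌊M/2⌋/2⌉. -/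
/-!
Let `S` and `T` be the maximal increasing and decreasing runs from a buffer `B` of `n` elements
with remaining input `J`. Both write all of `B`, and the `k`-th incoming element `J[k]`, which
arrives right after the `k`-th write, joins `S` if `S[k] ≤ J[k]` and `T` if `J[k] ≤ T[k]`.
At most `k` elements of `B` lie below `S[k]` and at most `k` above `T[k]`, so `S[k] ≤ T[k]`
whenever `2k < n`. Hence each of the first `⌊n/2⌋` incoming elements joins one of the runs,
`|S| + |T| ≥ 2n + ⌊n/2⌋`, and the longer run has length at least `n + ⌈⌊n/2⌋/2⌉`.
The buffer stays full while input remains, and once fewer than `⌊M/2⌋` input elements remain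
the current run exhausts the input, after which at most one more run follows.
-/

namespace RunGen

variable {α : Type*} [LinearOrder α]

lemma nextUp_spec {last? : Option α} {B : List α} {x : α} (h : nextUp last? B = some x) :
    x ∈ B ∧ last?.all (· ≤ x) ∧ ∀ b ∈ B, last?.all (· ≤ b) → x ≤ b := by
  cases last? with
  | none =>
    obtain ⟨hx, hmin⟩ := List.min?_eq_some_iff.1 h
    exact ⟨hx, rfl, fun b hb _ => hmin b hb⟩
  | some l =>
    obtain ⟨hx, hmin⟩ := List.min?_eq_some_iff.1 h
    rw [List.mem_filter] at hx
    exact ⟨hx.1, hx.2, fun b hb hlb => hmin b (List.mem_filter.2 ⟨hb, hlb⟩)⟩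

lemma all_eq_false_of_nextUp_eq_none {last? : Option α} {B : List α}
    (h : nextUp last? B = none) : ∀ b ∈ B, last?.all (· ≤ b) = false := by
  cases last? with
  | none => simp_all [nextUp]
  | some l =>
    intro b hb
    simpa using List.filter_eq_nil_iff.1 (List.min?_eq_none_iff.1 h) b hb

lemma countP_le_countP_erase_nextUp {last? : Option α} {B : List α} {x : α}
    (h : nextUp last? B = some x) (p : α → Bool) :
    B.countP (fun b => last?.all (· ≤ b) && p b) ≤
      (B.erase x).countP (fun b => x ≤ b && p b) + 1 := by
  obtain ⟨hx, -, hmin⟩ := nextUp_spec h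
  have hmono : (B.erase x).countP (fun b => last?.all (· ≤ b) && p b) ≤
      (B.erase x).countP (fun b => x ≤ b && p b) :=
    List.countP_mono_left fun b hb hq => by
      simp only [Bool.and_eq_true, decide_eq_true_eq] at hq ⊢
      exact ⟨hmin b (List.mem_of_mem_erase hb) hq.1, hq.2⟩
  rw [(List.perm_cons_erase hx).countP_eq, List.countP_cons]
  split <;> omega

lemma incAux_snd_snd (fuel : ℕ) (last? : Option α) (B J : List α) :
    (incAux fuel last? B J).2.2 = J.drop (incAux fuel last? B J).1.length := by
  induction fuel generalizing last? B J with
  | zero => simp [incAux]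
  | succ fuel ih =>
    rcases hx : nextUp last? B with _ | x
    · simp [incAux, hx]
    · simp only [incAux, hx, ih, List.drop_drop, List.length_cons]
      rw [Nat.add_comm]

lemma length_incAux_add_length (fuel : ℕ) (last? : Option α) (B J : List α) :
    (incAux fuel last? B J).1.length + (incAux fuel last? B J).2.1.length =
      B.length + min (incAux fuel last? B J).1.length J.length := by
  induction fuel generalizing last? B J with
  | zero => simp [incAux]
  | succ fuel ih =>
    rcases hx : nextUp last? B with _ | x
    · simp [incAux, hx]
    · have hB := List.length_erase_of_mem (nextUp_spec hx).1
      have hB0 := List.length_pos_of_mem (nextUp_spec hx).1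
      have := ih (some x) (B.erase x ++ J.take 1) (J.drop 1)
      simp only [List.length_append, List.length_take, List.length_drop] at this
      simp only [incAux, hx, List.length_cons]
      omega

lemma le_of_mem_incAux_some {fuel : ℕ} {l : α} {B J : List α} {y : α}
    (hy : y ∈ (incAux fuel (some l) B J).1) : l ≤ y := by
  induction fuel generalizing l B J with
  | zero => simp [incAux] at hy
  | succ fuel ih =>
    rcases hx : nextUp (some l) B with _ | x
    · simp [incAux, hx] at hy
    · have hlx : l ≤ x := by simpa using (nextUp_spec hx).2.1
      simp only [incAux, hx, List.mem_cons] at hy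
      rcases hy with rfl | hy
      · exact hlx
      · exact hlx.trans (ih hy)

/-- Elements below the `k`-th written one that could continue the run are written before it. -/
lemma countP_lt_getElem_incAux_le {fuel : ℕ} {last? : Option α} {B J : List α} {k : ℕ}
    (hk : k < (incAux fuel last? B J).1.length) :
    B.countP (fun b => last?.all (· ≤ b) && b < (incAux fuel last? B J).1[k]) ≤ k := by
  induction fuel generalizing last? B J k with
  | zero => simp [incAux] at hk
  | succ fuel ih =>
    rcases hx : nextUp last? B with _ | x
    · simp [incAux, hx] at hk
    · simp only [incAux, hx, List.length_cons] at hk ⊢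
      rcases k with _ | k
      · obtain ⟨-, -, hmin⟩ := nextUp_spec hx
        refine (List.countP_eq_zero.2 fun b hb hq => ?_).le
        simp only [List.getElem_cons_zero, Bool.and_eq_true, decide_eq_true_eq] at hq
        exact absurd (hmin b hb hq.1) (not_le.2 hq.2)
      · simp only [List.getElem_cons_succ]
        have hrest := ih (Nat.lt_of_succ_lt_succ hk)
        have hsub := (List.sublist_append_left (B.erase x) (J.take 1)).countP_le
          (p := fun b => (some x).all (· ≤ b) &&
            b < (incAux fuel (some x) (B.erase x ++ J.take 1) (J.drop 1)).1[k])
        have := countP_le_countP_erase_nextUp hx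
          (· < (incAux fuel (some x) (B.erase x ++ J.take 1) (J.drop 1)).1[k])
        simp only [Option.all_some] at hsub hrest
        omega

/-- Every buffered element that could continue the run is eventually written, and so is the
`k`-th incoming element if it is `≥` the `k`-th written one, since it arrives right after it. -/
lemma countP_add_countP_zip_le_length_incAux {fuel : ℕ} {last? : Option α} {B J : List α}
    (hfuel : B.length + J.length ≤ fuel) :
    B.countP (fun b => last?.all (· ≤ b)) +
        ((incAux fuel last? B J).1.zip J).countP (fun p => p.1 ≤ p.2) ≤
      (incAux fuel last? B J).1.length := by
  induction fuel generalizing last? B J with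
  | zero =>
    obtain rfl : B = [] := List.length_eq_zero_iff.1 (by omega)
    simp [incAux]
  | succ fuel ih =>
    rcases hx : nextUp last? B with _ | x
    · simpa [incAux, hx] using all_eq_false_of_nextUp_eq_none hx
    · have hB := List.length_erase_of_mem (nextUp_spec hx).1
      have hB0 := List.length_pos_of_mem (nextUp_spec hx).1
      have hrest := @ih (some x) (B.erase x ++ J.take 1) (J.drop 1)
        (by simp only [List.length_append, List.length_take, List.length_drop]; omega)
      have hhead := countP_le_countP_erase_nextUp hx (fun _ => true)
      have hzip (S : List α) : ((x :: S).zip J).countP (fun p => p.1 ≤ p.2) =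
          (J.take 1).countP (x ≤ ·) + (S.zip (J.drop 1)).countP (fun p => p.1 ≤ p.2) := by
        rcases J with _ | ⟨j, J⟩ <;> simp [List.countP_cons, Nat.add_comm]
      simp only [Bool.and_true] at hhead
      simp only [List.countP_append, Option.all_some] at hrest
      simp only [incAux, hx, List.length_cons, hzip]
      omega

lemma countP_lt_getElem_maxIncRun_le {B J : List α} {k : ℕ}
    (hk : k < (maxIncRun B J).length) :
    B.countP (· < (maxIncRun B J)[k]) ≤ k :=
  countP_lt_getElem_incAux_le (last? := none) hk

lemma length_add_countP_zip_le_length_maxIncRun (B J : List α) :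
    B.length + ((maxIncRun B J).zip J).countP (fun p => p.1 ≤ p.2) ≤
      (maxIncRun B J).length := by
  simpa [maxIncRun] using
    countP_add_countP_zip_le_length_incAux (last? := none) (B := B) (J := J) le_rfl

lemma decAux_eq_incAux_dual (fuel : ℕ) (last? : Option α) (B J : List α) :
    decAux fuel last? B J = incAux (α := αᵒᵈ) fuel last? B J := by
  have hnext (last? : Option α) (B : List α) :
      nextDown last? B = nextUp (α := αᵒᵈ) last? B := by
    cases last? <;> rfl
  induction fuel generalizing last? B J with
  | zero => rfl
  | succ n ih =>
    simp only [decAux, incAux, hnext]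
    split
    · rfl
    · rw [ih]; rfl

lemma maxDecRun_eq_maxIncRun_dual (B J : List α) :
    maxDecRun B J = maxIncRun (α := αᵒᵈ) B J :=
  congrArg Prod.fst (decAux_eq_incAux_dual _ _ _ _)

lemma decState_eq_incState_dual (B J : List α) :
    decState B J = incState (α := αᵒᵈ) B J :=
  congrArg Prod.snd (decAux_eq_incAux_dual _ _ _ _)

lemma countP_getElem_maxDecRun_lt_le {B J : List α} {k : ℕ}
    (hk : k < (maxDecRun B J).length) :
    B.countP ((maxDecRun B J)[k] < ·) ≤ k := by
  simp only [maxDecRun_eq_maxIncRun_dual] at hk ⊢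
  exact countP_lt_getElem_maxIncRun_le (α := αᵒᵈ) hk

lemma length_add_countP_zip_le_length_maxDecRun (B J : List α) :
    B.length + ((maxDecRun B J).zip J).countP (fun p => p.2 ≤ p.1) ≤
      (maxDecRun B J).length := by
  rw [maxDecRun_eq_maxIncRun_dual]
  exact length_add_countP_zip_le_length_maxIncRun (α := αᵒᵈ) B J

/-- At a position where `s ≤ t`, every `j` satisfies `s ≤ j` or `j ≤ t`. -/
lemma length_le_countP_zip_add_countP_zip {s t J : List α} (hst : List.Forall₂ (· ≤ ·) s t)
    (hJ : s.length ≤ J.length) :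
    s.length ≤
      (s.zip J).countP (fun p => p.1 ≤ p.2) + (t.zip J).countP (fun p => p.2 ≤ p.1) := by
  induction hst generalizing J with
  | nil => simp
  | @cons a b s t hab _ ih =>
    rcases J with _ | ⟨j, J⟩
    · simp at hJ
    have := ih (Nat.le_of_succ_le_succ hJ)
    have hj : a ≤ j ∨ j ≤ b := (le_total a j).imp_right fun hja => hja.trans hab
    simp only [List.zip_cons_cons, List.countP_cons, List.length_cons, decide_eq_true_eq]
    rcases hj with hj | hj <;> split_ifs <;> omega

lemma getElem_maxIncRun_le_getElem_maxDecRun {B J : List α} {k : ℕ} (hk : 2 * k < B.length)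
    (hS : k < (maxIncRun B J).length) (hT : k < (maxDecRun B J).length) :
    (maxIncRun B J)[k] ≤ (maxDecRun B J)[k] := by
  by_contra! hlt
  have hcover : B.length ≤ B.countP (· < (maxIncRun B J)[k]) +
      B.countP ((maxDecRun B J)[k] < ·) := by
    rw [List.length_eq_countP_add_countP (· < (maxIncRun B J)[k])]
    refine Nat.add_le_add_left (List.countP_mono_left fun b _ hb => ?_) _
    simp only [decide_eq_true_eq, not_lt] at hb ⊢
    exact hlt.trans_le hb
  have := countP_lt_getElem_maxIncRun_le hS
  have := countP_getElem_maxDecRun_lt_le hT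
  omega

lemma length_maxIncRun_add_length_maxDecRun {B J : List α} (hJ : B.length / 2 ≤ J.length) :
    2 * B.length + B.length / 2 ≤ (maxIncRun B J).length + (maxDecRun B J).length := by
  have hS := length_add_countP_zip_le_length_maxIncRun B J
  have hT := length_add_countP_zip_le_length_maxDecRun B J
  have hle : List.Forall₂ (· ≤ ·) ((maxIncRun B J).take (B.length / 2))
      ((maxDecRun B J).take (B.length / 2)) := by
    rw [List.forall₂_iff_get]
    refine ⟨by simp only [List.length_take]; omega, fun i hiS hiT => ?_⟩
    simp only [List.length_take, List.get_eq_getElem, List.getElem_take] at hiS hiT ⊢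
    exact getElem_maxIncRun_le_getElem_maxDecRun (by omega) _ _
  have htake (l : List α) :
      (l.take (B.length / 2)).zip (J.take (B.length / 2)) = (l.zip J).take (B.length / 2) := by
    simp only [List.zip, List.take_zipWith]
  have hcount := length_le_countP_zip_add_countP_zip hle (J := J.take (B.length / 2))
    (by simp only [List.length_take]; omega)
  rw [htake, htake] at hcount
  have hS' := (List.take_sublist (B.length / 2) ((maxIncRun B J).zip J)).countP_le
    (p := fun p => p.1 ≤ p.2)
  have hT' := (List.take_sublist (B.length / 2) ((maxDecRun B J).zip J)).countP_le
    (p := fun p => p.2 ≤ p.1)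
  simp only [List.length_take] at hcount
  omega

lemma dirState_snd (d : Bool) (B J : List α) :
    (dirState d B J).2 = J.drop (dirRun d B J).length := by
  cases d
  · simp only [dirState, dirRun, Bool.false_eq_true, maxDecRun_eq_maxIncRun_dual,
      decState_eq_incState_dual]
    exact incAux_snd_snd (α := αᵒᵈ) _ _ _ _
  · exact incAux_snd_snd _ _ _ _

lemma length_dirRun_add_length_dirState_fst (d : Bool) (B J : List α) :
    (dirRun d B J).length + (dirState d B J).1.length =
      B.length + min (dirRun d B J).length J.length := by
  cases d
  · simp only [dirState, dirRun, Bool.false_eq_true, maxDecRun_eq_maxIncRun_dual,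
      decState_eq_incState_dual]
    exact length_incAux_add_length (α := αᵒᵈ) _ _ _ _
  · exact length_incAux_add_length _ _ _ _

lemma length_le_length_dirRun (d : Bool) (B J : List α) : B.length ≤ (dirRun d B J).length := by
  cases d
  · have := length_add_countP_zip_le_length_maxDecRun B J
    simp only [dirRun, Bool.false_eq_true, if_false]
    omega
  · have := length_add_countP_zip_le_length_maxIncRun B J
    simp only [dirRun, if_true]
    omega

lemma le_length_dirRun_of_longer {d : Bool} {B J : List α} (hJ : B.length / 2 ≤ J.length)
    (hlonger : (dirRun (!d) B J).length ≤ (dirRun d B J).length) :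
    B.length + (B.length / 2 + 1) / 2 ≤ (dirRun d B J).length := by
  have := length_maxIncRun_add_length_maxDecRun hJ
  cases d <;> simp only [dirRun, Bool.not_false, Bool.not_true, Bool.false_eq_true, if_true,
    if_false] at hlonger ⊢ <;> omega

lemma dirState_nil (d : Bool) (B : List α) : dirState d B [] = ([], []) := by
  have hlen := length_dirRun_add_length_dirState_fst d B []
  have := length_le_length_dirRun d B []
  ext1
  · exact List.length_eq_zero_iff.1 (by simp only [List.length_nil, Nat.min_zero] at hlen; omega)
  · simp [dirState_snd]

lemma GreedyRuns.length_le_one {B : List α} {P : List (List α)} (h : GreedyRuns B [] P) :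
    P.length ≤ 1 := by
  cases h with
  | nil => simp
  | step _ _ _ _ _ _ hrest =>
    rw [dirState_nil] at hrest
    cases hrest with
    | nil => simp
    | step _ _ _ _ hB => exact absurd rfl hB

/-- `hfull` says that the buffer holds `M` elements as long as input remains. -/
theorem GreedyRuns.le_length_getD {M : ℕ} {B J : List α} {P : List (List α)}
    (h : GreedyRuns B J P) (hfull : B.length = min M (B.length + J.length)) :
    ∀ i, i + 2 < P.length → M + (M / 2 + 1) / 2 ≤ (P.getD i []).length := by
  induction h with
  | nil => simp
  | step d B J P hB hlonger hrest ih =>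
    have hrun := length_le_length_dirRun d B J
    have hlen := length_dirRun_add_length_dirState_fst d B J
    have hsnd := congrArg List.length (dirState_snd d B J)
    rw [List.length_drop] at hsnd
    have hB0 := List.length_pos_iff.2 hB
    rintro (_ | i) hi
    · by_cases hJ : M / 2 ≤ J.length
      · have hBM : B.length = M := by omega
        simpa [hBM] using le_length_dirRun_of_longer (hBM ▸ hJ) hlonger
      · have hnil : (dirState d B J).2 = [] := List.length_eq_zero_iff.1 (by omega)
        have := (hnil ▸ hrest).length_le_one
        simp only [List.length_cons] at hi
        omega
    · exact ih (by omega) i (by simp only [List.length_cons] at hi; omega)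

end RunGen

open RunGen

theorem stmt_9_general {α : Type*} [LinearOrder α] (M : ℕ) (I : List α)
    (P : List (List α)) (hP : GreedyRuns (I.take M) (I.drop M) P) :
    ∀ i : ℕ, i + 2 < P.length → M + (M / 2 + 1) / 2 ≤ (P.getD i []).length :=
  hP.le_length_getD (by simp only [List.length_take, List.length_drop]; omega)

/-- Every run written by the greedy run-generation algorithm with buffer size `M`, except
possibly its last two runs, has length at least `M + ⌈⌊M/2⌋/2⌉`. -/
theorem stmt_9 {α : Type*} [LinearOrder α] (M : ℕ) (hM : 0 < M) (I : List α)
    (P : List (List α)) (hP : GreedyRuns (I.take M) (I.drop M) P) :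
    ∀ i : ℕ, i + 2 < P.length → M + (M / 2 + 1) / 2 ≤ (P.getD i []).length :=
  stmt_9_general M I P hP
end
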